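/- arXiv:1706.05505 — 2 statements merged into one kernel-verified Lean document; each statement's English description precedes it below -/
import Mathlib

section
/- For endomorphisms J, K, L of the tangent bundle of a pseudo-Riemannian manifold and the associated Nijenhuis tensor defined via the symmetric braces {x,y} = ∇_x y + ∇_y x, the identity {J,KL} + {K,JL} = {J,K}∧̄L + J∧̄{K,L} + K∧̄{J,L} holds, where (S∧̄L)(x,y) = S(Lx,y) + S(x,Ly) and (L∧̄S)(x,y) = L(S(x,y)). -/
/-- The symmetric braces `{x,y} = ∇_x y + ∇_y x`. -/
def nijBraces {V : Type*} [AddCommGroup V] (nabla : V → V → V) (x y : V) : V :=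
  nabla x y + nabla y x

/-- The associated Nijenhuis tensor `{J,K}` of two endomorphisms, defined by
`2{J,K}(x,y) = (JK+KJ){x,y} + {Jx,Ky} - J{Kx,y} - J{x,Ky}
  + {Kx,Jy} - K{Jx,y} - K{x,Jy}`. -/
noncomputable def assocNij {V : Type*} [AddCommGroup V] [Module ℝ V]
    (nabla : V → V → V) (J K : V →ₗ[ℝ] V) (x y : V) : V :=
  (2⁻¹ : ℝ) •
    (J (K (nijBraces nabla x y)) + K (J (nijBraces nabla x y))
      + nijBraces nabla (J x) (K y)
      - J (nijBraces nabla (K x) y) - J (nijBraces nabla x (K y))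
      + nijBraces nabla (K x) (J y)
      - K (nijBraces nabla (J x) y) - K (nijBraces nabla x (J y)))

/-- For endomorphisms `J`, `K`, `L` of the tangent bundle of a
pseudo-Riemannian manifold, the identity
`{J,KL} + {K,JL} = {J,K}∧̄L + J∧̄{K,L} + K∧̄{J,L}` holds, where
`(S∧̄L)(x,y) = S(Lx,y) + S(x,Ly)` and `(L∧̄S)(x,y) = L(S(x,y))`. -/
theorem assoc_nijenhuis_composition_identity
    {V : Type*} [AddCommGroup V] [Module ℝ V]
    (g : V → V → ℝ) (Dg : V → V → V → ℝ) (nabla : V → V → V)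
    (hgsymm : ∀ x y, g x y = g y x)
    (hcompat : ∀ x y z, Dg x y z = g (nabla x y) z + g y (nabla x z))
    (J K L : V →ₗ[ℝ] V) :
    ∀ x y : V,
      assocNij nabla J (K ∘ₗ L) x y + assocNij nabla K (J ∘ₗ L) x y
      = assocNij nabla J K (L x) y + assocNij nabla J K x (L y)
        + J (assocNij nabla K L x y) + K (assocNij nabla J L x y) := by
  intro x y
  simp only [assocNij, nijBraces, LinearMap.comp_apply, map_add, map_sub, map_smul]
  module
end

section
/- On an almost hypercomplex manifold with the associated Nijenhuis tensors {J_α,J_β} of the structure (J₁,J₂,J₃): if {J₁,J₁} = 0 and {J₂,J₂} = 0, then all six associated Nijenhuis tensors {J₁,J₁}, {J₂,J₂}, {J₃,J₃}, {J₁,J₂}, {J₂,J₃}, {J₃,J₁} vanish. -/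
/-- On an almost hypercomplex manifold, if the associated
Nijenhuis tensors `{J₁,J₁}` and `{J₂,J₂}` vanish, then all six associated
Nijenhuis tensors `{J₁,J₁}`, `{J₂,J₂}`, `{J₃,J₃}`, `{J₁,J₂}`, `{J₂,J₃}`,
`{J₃,J₁}` vanish. -/
theorem two_assoc_nijenhuis_vanish_implies_all
    {V : Type*} [AddCommGroup V] [Module ℝ V]
    (g : V → V → ℝ) (Dg : V → V → V → ℝ) (nabla : V → V → V)
    (hgsymm : ∀ x y, g x y = g y x)
    (hcompat : ∀ x y z, Dg x y z = g (nabla x y) z + g y (nabla x z))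
    (J1 J2 J3 : V →ₗ[ℝ] V)
    (hJ1sq : ∀ x, J1 (J1 x) = -x)
    (hJ2sq : ∀ x, J2 (J2 x) = -x)
    (hJ3sq : ∀ x, J3 (J3 x) = -x)
    (h1 : ∀ x, J1 x = J2 (J3 x)) (h1' : ∀ x, J1 x = -(J3 (J2 x)))
    (h2 : ∀ x, J2 x = J3 (J1 x)) (h2' : ∀ x, J2 x = -(J1 (J3 x)))
    (h3 : ∀ x, J3 x = J1 (J2 x)) (h3' : ∀ x, J3 x = -(J2 (J1 x)))
    (hN1 : ∀ x y, assocNij nabla J1 J1 x y = 0)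
    (hN2 : ∀ x y, assocNij nabla J2 J2 x y = 0) :
    (∀ x y, assocNij nabla J1 J1 x y = 0) ∧
    (∀ x y, assocNij nabla J2 J2 x y = 0) ∧
    (∀ x y, assocNij nabla J3 J3 x y = 0) ∧
    (∀ x y, assocNij nabla J1 J2 x y = 0) ∧
    (∀ x y, assocNij nabla J2 J3 x y = 0) ∧
    (∀ x y, assocNij nabla J3 J1 x y = 0) := by
  have app : ∀ (f : V →ₗ[ℝ] V) {a b : V}, a = b → f a = f b := fun f _ _ h => by rw [h]
  have c23 : ∀ t, J2 (J3 t) = J1 t := fun t => (h1 t).symm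
  have c32 : ∀ t, J3 (J2 t) = -(J1 t) := fun t => by rw [h1', neg_neg]
  have c31 : ∀ t, J3 (J1 t) = J2 t := fun t => (h2 t).symm
  have c13 : ∀ t, J1 (J3 t) = -(J2 t) := fun t => by rw [h2', neg_neg]
  have c12 : ∀ t, J1 (J2 t) = J3 t := fun t => (h3 t).symm
  have c21 : ∀ t, J2 (J1 t) = -(J3 t) := fun t => by rw [h3', neg_neg]
  refine ⟨hN1, hN2, ?_, ?_, ?_, ?_⟩
  · intro x y
    have h0 := hN1 x y
    have h1 := app J2 (hN1 x (J2 y))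
    have h2 := app J2 (hN1 x (-(J2 y)))
    have h3 := app J3 (hN1 x (J3 y))
    have h4 := hN1 (-x) y
    have h5 := app J2 (hN1 (-x) (J2 y))
    have h6 := app J2 (hN1 (-x) (-(J2 y)))
    have h7 := app J3 (hN1 (-x) (J3 y))
    have h8 := app J1 (hN1 (J1 x) y)
    have h9 := app J3 (hN1 (J1 x) (J2 y))
    have h10 := app J3 (hN1 (J1 x) (-(J2 y)))
    have h11 := app J2 (hN1 (J1 x) (J3 y))
    have h12 := app J2 (hN1 (J2 x) y)
    have h13 := hN1 (J2 x) (J2 y)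
    have h14 := hN1 (J2 x) (-(J2 y))
    have h15 := app J1 (hN1 (J2 x) (J3 y))
    have h16 := hN2 x y
    have h17 := app J1 (hN2 x (J1 y))
    have h18 := app J3 (hN2 x (J3 y))
    have h19 := app J1 (hN2 (-(J1 x)) y)
    have h20 := hN2 (-(J1 x)) (J1 y)
    simp only [assocNij, map_add, map_sub, map_neg, map_smul, map_zero, neg_neg,
      hJ1sq, hJ2sq, hJ3sq, c23, c32, c31, c13, c12, c21] at h0 h1 h2 h3 h4 h5 h6 h7 h8 h9 h10 h11 h12 h13 h14 h15 h16 h17 h18 h19 h20 ⊢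
    linear_combination (norm := module) ((1/2 : ℝ)) • h0 + ((-1/2 : ℝ)) • h1 + ((1/2 : ℝ)) • h2 + ((-1/2 : ℝ)) • h3 + ((-1/2 : ℝ)) • h4 + ((1/2 : ℝ)) • h5 + ((-1/2 : ℝ)) • h6 + ((1/2 : ℝ)) • h7 + ((-1/2 : ℝ)) • h8 + ((-1/2 : ℝ)) • h9 + ((1/2 : ℝ)) • h10 + ((1/2 : ℝ)) • h11 + ((-1/2 : ℝ)) • h12 + ((1/2 : ℝ)) • h13 + ((1/2 : ℝ)) • h14 + ((1/2 : ℝ)) • h15 + ((1/2 : ℝ)) • h16 + ((1/2 : ℝ)) • h17 + ((1/1 : ℝ)) • h18 + ((1/2 : ℝ)) • h19 + ((-1/2 : ℝ)) • h20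
  · intro x y
    have h0 := app J3 (hN1 x y)
    have h1 := app J1 (hN1 x (J2 y))
    have h2 := app J1 (hN1 x (-(J2 y)))
    have h3 := hN1 x (J3 y)
    have h4 := app J1 (hN1 (J2 x) y)
    have h5 := app J3 (hN1 (J2 x) (J2 y))
    have h6 := app J3 (hN1 (J2 x) (-(J2 y)))
    have h7 := app J2 (hN1 (J2 x) (J3 y))
    have h8 := app J1 (hN1 (-(J2 x)) y)
    have h9 := app J3 (hN1 (-(J2 x)) (J2 y))
    have h10 := app J3 (hN1 (-(J2 x)) (-(J2 y)))
    have h11 := app J2 (hN1 (-(J2 x)) (J3 y))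
    have h12 := hN1 (J3 x) y
    have h13 := app J2 (hN1 (J3 x) (J2 y))
    have h14 := app J2 (hN1 (J3 x) (-(J2 y)))
    have h15 := app J3 (hN1 (J3 x) (J3 y))
    have h16 := app J3 (hN2 x y)
    have h17 := app J2 (hN2 x (J1 y))
    have h18 := app J2 (hN2 (J1 x) y)
    have h19 := app J3 (hN2 (J1 x) (J1 y))
    simp only [assocNij, map_add, map_sub, map_neg, map_smul, map_zero, neg_neg,
      hJ1sq, hJ2sq, hJ3sq, c23, c32, c31, c13, c12, c21] at h0 h1 h2 h3 h4 h5 h6 h7 h8 h9 h10 h11 h12 h13 h14 h15 h16 h17 h18 h19 ⊢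
    linear_combination (norm := module) ((1/4 : ℝ)) • h0 + ((1/4 : ℝ)) • h1 + ((-1/4 : ℝ)) • h2 + ((1/4 : ℝ)) • h3 + ((1/4 : ℝ)) • h4 + ((-1/4 : ℝ)) • h5 + ((1/4 : ℝ)) • h6 + ((1/4 : ℝ)) • h7 + ((-1/4 : ℝ)) • h8 + ((1/4 : ℝ)) • h9 + ((-1/4 : ℝ)) • h10 + ((-1/4 : ℝ)) • h11 + ((1/4 : ℝ)) • h12 + ((1/4 : ℝ)) • h13 + ((-1/4 : ℝ)) • h14 + ((1/4 : ℝ)) • h15 + ((-1/4 : ℝ)) • h16 + ((1/4 : ℝ)) • h17 + ((1/4 : ℝ)) • h18 + ((1/4 : ℝ)) • h19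
  · intro x y
    have h0 := app J1 (hN1 x y)
    have h1 := app J3 (hN1 x (J2 y))
    have h2 := app J3 (hN1 x (-(J2 y)))
    have h3 := app J2 (hN1 x (J3 y))
    have h4 := app J1 (hN1 (-x) y)
    have h5 := app J3 (hN1 (-x) (J2 y))
    have h6 := app J3 (hN1 (-x) (-(J2 y)))
    have h7 := app J2 (hN1 (-x) (J3 y))
    have h8 := hN1 (J1 x) y
    have h9 := app J2 (hN1 (J1 x) (J2 y))
    have h10 := app J2 (hN1 (J1 x) (-(J2 y)))
    have h11 := app J3 (hN1 (J1 x) (J3 y))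
    have h12 := app J3 (hN1 (J2 x) y)
    have h13 := app J1 (hN1 (J2 x) (J2 y))
    have h14 := app J1 (hN1 (J2 x) (-(J2 y)))
    have h15 := hN1 (J2 x) (J3 y)
    have h16 := app J1 (hN2 x y)
    have h17 := hN2 x (J1 y)
    have h18 := app J2 (hN2 x (J3 y))
    have h19 := hN2 (-(J1 x)) y
    have h20 := app J1 (hN2 (-(J1 x)) (J1 y))
    simp only [assocNij, map_add, map_sub, map_neg, map_smul, map_zero, neg_neg,
      hJ1sq, hJ2sq, hJ3sq, c23, c32, c31, c13, c12, c21] at h0 h1 h2 h3 h4 h5 h6 h7 h8 h9 h10 h11 h12 h13 h14 h15 h16 h17 h18 h19 h20 ⊢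
    linear_combination (norm := module) ((-1/4 : ℝ)) • h0 + ((1/4 : ℝ)) • h1 + ((-1/4 : ℝ)) • h2 + ((-1/4 : ℝ)) • h3 + ((1/4 : ℝ)) • h4 + ((-1/4 : ℝ)) • h5 + ((1/4 : ℝ)) • h6 + ((1/4 : ℝ)) • h7 + ((-1/4 : ℝ)) • h8 + ((-1/4 : ℝ)) • h9 + ((1/4 : ℝ)) • h10 + ((-1/4 : ℝ)) • h11 + ((1/4 : ℝ)) • h12 + ((1/4 : ℝ)) • h13 + ((-1/4 : ℝ)) • h14 + ((1/4 : ℝ)) • h15 + ((1/4 : ℝ)) • h16 + ((1/4 : ℝ)) • h17 + ((1/2 : ℝ)) • h18 + ((1/4 : ℝ)) • h19 + ((1/4 : ℝ)) • h20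
  · intro x y
    have h0 := app J2 (hN1 x y)
    have h1 := hN1 x (J2 y)
    have h2 := hN1 x (-(J2 y))
    have h3 := app J1 (hN1 x (J3 y))
    have h4 := hN1 (J2 x) y
    have h5 := app J2 (hN1 (J2 x) (J2 y))
    have h6 := app J2 (hN1 (J2 x) (-(J2 y)))
    have h7 := app J3 (hN1 (J2 x) (J3 y))
    have h8 := hN1 (-(J2 x)) y
    have h9 := app J2 (hN1 (-(J2 x)) (J2 y))
    have h10 := app J2 (hN1 (-(J2 x)) (-(J2 y)))
    have h11 := app J3 (hN1 (-(J2 x)) (J3 y))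
    have h12 := app J1 (hN1 (J3 x) y)
    have h13 := app J3 (hN1 (J3 x) (J2 y))
    have h14 := app J3 (hN1 (J3 x) (-(J2 y)))
    have h15 := app J2 (hN1 (J3 x) (J3 y))
    have h16 := app J2 (hN2 x y)
    have h17 := app J3 (hN2 x (J1 y))
    have h18 := app J3 (hN2 (J1 x) y)
    have h19 := app J2 (hN2 (J1 x) (J1 y))
    simp only [assocNij, map_add, map_sub, map_neg, map_smul, map_zero, neg_neg,
      hJ1sq, hJ2sq, hJ3sq, c23, c32, c31, c13, c12, c21] at h0 h1 h2 h3 h4 h5 h6 h7 h8 h9 h10 h11 h12 h13 h14 h15 h16 h17 h18 h19 ⊢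
    linear_combination (norm := module) ((-1/4 : ℝ)) • h0 + ((1/4 : ℝ)) • h1 + ((1/4 : ℝ)) • h2 + ((1/4 : ℝ)) • h3 + ((1/4 : ℝ)) • h4 + ((1/4 : ℝ)) • h5 + ((-1/4 : ℝ)) • h6 + ((1/4 : ℝ)) • h7 + ((1/4 : ℝ)) • h8 + ((-1/4 : ℝ)) • h9 + ((1/4 : ℝ)) • h10 + ((-1/4 : ℝ)) • h11 + ((1/4 : ℝ)) • h12 + ((1/4 : ℝ)) • h13 + ((-1/4 : ℝ)) • h14 + ((-1/4 : ℝ)) • h15 + ((1/4 : ℝ)) • h16 + ((1/4 : ℝ)) • h17 + ((1/4 : ℝ)) • h18 + ((-1/4 : ℝ)) • h19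
end
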